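/- Let T: 𝒜 → 𝒜 be a linear map. Then T preserves power inner products (i.e. ⟨(Tf)^k, (Tg)^k⟩ = ⟨f^k, g^k⟩ for all integers k ≥ 1 and all f,g ∈ 𝒜) and is surjective onto 𝒜 if and only if there exist a measurable function α: ℝ^d → ℝ and a *-automorphism T₁ of 𝒜 such that Tf = e^{iα}·(T₁f) for every f ∈ 𝒜. (This is the unitary case of the structure theorem of the paper: Γ₂(T) is a unitary operator on the quadratic Fock space if and only if T = e^{iα}T₁ with T₁ a *-automorphism.) -/

import Mathlib

open MeasureTheory Complex Finset
open scoped Nat ENNReal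

noncomputable section

/-- The domain `ℝ^d`. -/
abbrev Dom (d : ℕ) := Fin d → ℝ

/-- Membership in `𝒜 = L²(ℝ^d) ∩ L^∞(ℝ^d)`. -/
def MemA (d : ℕ) (f : Dom d → ℂ) : Prop :=
  MemLp f 2 (volume : Measure (Dom d)) ∧ MemLp f ⊤ (volume : Measure (Dom d))

/-- `⟨f^k, g^k⟩`, the power inner products. -/
def pip (d : ℕ) (f g : Dom d → ℂ) (k : ℕ) : ℂ :=
  ∫ x : Dom d, (starRingEnd ℂ) (f x) ^ k * g x ^ k

/-- `S_n(f,g)`, the inner product of quadratic `n`-particle vectors. -/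
def Sker (c : ℝ) (d : ℕ) (f g : Dom d → ℂ) (n : ℕ) : ℂ :=
  ∑ p : Nat.Partition n,
    (n ! : ℂ) ^ 2 * 2 ^ (2 * n - 1) *
      ∏ j ∈ p.parts.toFinset,
        (c : ℂ) ^ p.parts.count j /
            (((p.parts.count j)! : ℂ) * (j : ℂ) ^ p.parts.count j) *
          pip d f g j ^ p.parts.count j

/-- `K(f,g) = ⟨Ψ(f),Ψ(g)⟩`, the inner product of quadratic exponential vectors. -/
def Kker (c : ℝ) (d : ℕ) (f g : Dom d → ℂ) : ℂ :=
  Complex.exp (-(c / 2 : ℂ) *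
    ∫ x : Dom d, Complex.log (1 - 4 * (starRingEnd ℂ) (f x) * g x))

/-- A `*`-endomorphism of the Hilbert algebra `𝒜 = L²(ℝ^d) ∩ L^∞(ℝ^d)`: a linear map
of `𝒜` into itself (well defined on a.e.-equivalence classes) preserving the `L²` inner
product, pointwise multiplication and conjugation. -/
structure IsStarEndo (d : ℕ) (T₁ : (Dom d → ℂ) → (Dom d → ℂ)) : Prop where
  mem : ∀ f, MemA d f → MemA d (T₁ f)
  ae_eq : ∀ f g, MemA d f → MemA d g → f =ᵐ[(volume : Measure (Dom d))] g →
    T₁ f =ᵐ[(volume : Measure (Dom d))] T₁ g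
  add : ∀ f g, MemA d f → MemA d g →
    T₁ (f + g) =ᵐ[(volume : Measure (Dom d))] T₁ f + T₁ g
  smul : ∀ (a : ℂ) (f : Dom d → ℂ), MemA d f →
    T₁ (a • f) =ᵐ[(volume : Measure (Dom d))] a • T₁ f
  inner : ∀ f g, MemA d f → MemA d g →
    ∫ x : Dom d, (starRingEnd ℂ) (T₁ f x) * T₁ g x =
      ∫ x : Dom d, (starRingEnd ℂ) (f x) * g x
  mul : ∀ f g, MemA d f → MemA d g →
    T₁ (f * g) =ᵐ[(volume : Measure (Dom d))] T₁ f * T₁ g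
  star : ∀ f, MemA d f →
    T₁ (fun x => (starRingEnd ℂ) (f x)) =ᵐ[(volume : Measure (Dom d))]
      fun x => (starRingEnd ℂ) (T₁ f x)

/-- A `*`-automorphism of `𝒜`: a bijective (on a.e.-equivalence classes)
`*`-endomorphism. -/
def IsStarAuto (d : ℕ) (T₁ : (Dom d → ℂ) → (Dom d → ℂ)) : Prop :=
  IsStarEndo d T₁ ∧
  (∀ g, MemA d g → ∃ f, MemA d f ∧ T₁ f =ᵐ[(volume : Measure (Dom d))] g) ∧
  (∀ f g, MemA d f → MemA d g →
    T₁ f =ᵐ[(volume : Measure (Dom d))] T₁ g → f =ᵐ[(volume : Measure (Dom d))] g)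

/-!
Polarizing `⟨(Tf)^k, (Tg)^k⟩ = ⟨f^k, g^k⟩` in `f ↦ f + s h`, `g ↦ g + t h` and comparing the
coefficients of `s̄ t` gives `∫ conj (Tf)^j (Tg)^j |Th|² = ∫ conj f^j g^j |h|²` for every `j`.
As `T` is onto `𝒜`, `|Th|²` runs through all indicators of sets of finite measure, so `j = 1`
shows that `conj (Tp) · Tq` depends only on `conj p · q`, and `j = 2` gives `|T(p²)| = |Tp|²`.
Fix a positive `e ∈ 𝒜` and put `u = Te`, `w = T(e²)`. Then `u ≠ 0` a.e.,
`T (conj f) = u · conj (Tf) / conj u` and `u² T(fg) = Tf · Tg · w`, while `|w| = |u|²`.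
Hence `e^{iθ} := u² / w` is a measurable phase, and `T₁ = e^{-iθ} T` is a multiplicative,
conjugation-preserving isometry of `𝒜` onto itself. Conversely, a `*`-automorphism preserves
powers, and a unimodular factor does not change `⟨(Tf)^k, (Tg)^k⟩`.
-/

open ComplexConjugate

section Algebra

variable {d : ℕ} {f g : Dom d → ℂ}

lemma MemA.add (hf : MemA d f) (hg : MemA d g) : MemA d (f + g) :=
  ⟨hf.1.add hg.1, hf.2.add hg.2⟩

lemma MemA.sub (hf : MemA d f) (hg : MemA d g) : MemA d (f - g) :=
  ⟨hf.1.sub hg.1, hf.2.sub hg.2⟩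

lemma MemA.const_smul (hf : MemA d f) (a : ℂ) : MemA d (a • f) :=
  ⟨hf.1.const_smul a, hf.2.const_smul a⟩

lemma MemA.conj (hf : MemA d f) : MemA d (fun x => conj (f x)) :=
  ⟨hf.1.star, hf.2.star⟩

lemma MemA.mul_of_memLp_top {b : Dom d → ℂ} (hf : MemA d f) (hb : MemLp b ⊤ volume) :
    MemA d (fun x => b x * f x) :=
  ⟨hf.1.mul' hb, hf.2.mul' hb⟩

lemma MemA.mul (hf : MemA d f) (hg : MemA d g) : MemA d (f * g) :=
  hg.mul_of_memLp_top hf.2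

lemma MeasureTheory.MemLp.pow_top {α : Type*} [MeasurableSpace α] {μ : Measure α} {f : α → ℂ}
    (hf : MemLp f ⊤ μ) (n : ℕ) : MemLp (fun x => f x ^ n) ⊤ μ := by
  induction n with
  | zero => simpa using memLp_top_const (1 : ℂ)
  | succ n ih => simpa only [pow_succ] using hf.mul' ih

lemma MemA.pow (hf : MemA d f) {n : ℕ} (hn : 1 ≤ n) : MemA d (fun x => f x ^ n) := by
  obtain ⟨n, rfl⟩ := Nat.exists_eq_add_of_le' hn
  simpa only [pow_succ] using hf.mul_of_memLp_top (hf.2.pow_top n)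

lemma MemA.pow_mul_pow (hf : MemA d f) (hg : MemA d g) {m n : ℕ} (hmn : 1 ≤ m + n) :
    MemA d (fun x => f x ^ m * g x ^ n) := by
  rcases Nat.eq_zero_or_pos n with rfl | hn
  · simpa using hf.pow hmn
  · exact (hg.pow hn).mul_of_memLp_top (hf.2.pow_top m)

lemma memA_indicator_one {S : Set (Dom d)} (hS : MeasurableSet S) (hSfin : volume S ≠ ∞) :
    MemA d (S.indicator fun _ => (1 : ℂ)) :=
  ⟨memLp_indicator_const 2 hS 1 (Or.inr hSfin), memLp_indicator_const ⊤ hS 1 (Or.inr hSfin)⟩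

lemma exists_pos_memA (d : ℕ) :
    ∃ E : Dom d → ℝ, (∀ x, 0 < E x) ∧ MemA d (fun x => (E x : ℂ)) := by
  refine ⟨fun x => ∏ i, Real.exp (-x i ^ 2), fun x => by positivity, ?_⟩
  have hm : AEStronglyMeasurable (fun x : Dom d => ((∏ i, Real.exp (-x i ^ 2) : ℝ) : ℂ)) volume :=
    (by fun_prop : Continuous _).aestronglyMeasurable
  have hnorm : ∀ x : Dom d, ‖((∏ i, Real.exp (-x i ^ 2) : ℝ) : ℂ)‖ = ∏ i, Real.exp (-x i ^ 2) :=
    fun x => by rw [norm_real, Real.norm_of_nonneg (by positivity)]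
  refine ⟨(memLp_two_iff_integrable_sq_norm hm).2 ?_,
    memLp_top_of_bound hm 1 (ae_of_all _ fun x => ?_)⟩
  · refine (Integrable.fintype_prod (f := fun _ t => Real.exp (-2 * t ^ 2)) (μ := fun _ => volume)
      fun _ => integrable_exp_neg_mul_sq two_pos).congr (ae_of_all _ fun x => ?_)
    simp only [hnorm, ← Finset.prod_pow, ← Real.exp_nat_mul]
    congr! 2; push_cast; ring
  · rw [hnorm]
    exact Finset.prod_le_one (fun _ _ => by positivity) fun _ _ =>
      Real.exp_le_one_iff.2 (neg_nonpos.2 (sq_nonneg _))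

end Algebra

section Integrals

variable {α : Type*} [MeasurableSpace α] {μ : Measure α}

lemma MeasureTheory.MemLp.integrable_conj_mul {f g : α → ℂ} (hf : MemLp f 2 μ) (hg : MemLp g 2 μ) :
    Integrable (fun x => conj (f x) * g x) μ :=
  hf.star.integrable_mul hg

lemma integral_conj_mul_self_eq_zero_iff {f : α → ℂ} (hf : MemLp f 2 μ) :
    ∫ x, conj (f x) * f x ∂μ = 0 ↔ f =ᵐ[μ] 0 := by
  have hsq : (fun x => conj (f x) * f x) = fun x => ((‖f x‖ ^ 2 : ℝ) : ℂ) := by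
    ext x; rw [conj_mul']; push_cast; rfl
  rw [hsq, integral_complex_ofReal, ofReal_eq_zero,
    integral_eq_zero_iff_of_nonneg (fun x => by positivity)
      ((memLp_two_iff_integrable_sq_norm hf.1).1 hf)]
  simp [Filter.EventuallyEq]

lemma setIntegral_eq_integral_mul_conj_mul_self {v w : α → ℂ} {S : Set α} (hS : MeasurableSet S)
    (hw : w =ᵐ[μ] S.indicator fun _ => 1) :
    ∫ x in S, v x ∂μ = ∫ x, v x * (conj (w x) * w x) ∂μ := by
  rw [← integral_indicator hS]
  refine integral_congr_ae ?_
  filter_upwards [hw] with x hx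
  by_cases hxS : x ∈ S <;> simp [hx, hxS]

lemma exists_measurable_exp_mul_I_ae_eq {ρ : α → ℂ} (hρ : AEMeasurable ρ μ)
    (hρ1 : ∀ᵐ x ∂μ, ‖ρ x‖ = 1) :
    ∃ θ : α → ℝ, Measurable θ ∧ ∀ᵐ x ∂μ, exp (I * θ x) = ρ x := by
  refine ⟨fun x => arg (hρ.mk ρ x), measurable_arg.comp hρ.measurable_mk, ?_⟩
  filter_upwards [hρ.ae_eq_mk, hρ1] with x hx hx1
  rw [hx] at hx1 ⊢
  conv_rhs => rw [← norm_mul_exp_arg_mul_I (hρ.mk ρ x), hx1]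
  simp [mul_comm]

lemma memLp_top_exp_I_mul {θ : α → ℝ} (hθ : Measurable θ) : MemLp (fun x => exp (I * θ x)) ⊤ μ :=
  memLp_top_of_bound (by fun_prop : Measurable fun x => exp (I * θ x)).aestronglyMeasurable 1
    (ae_of_all _ fun x => by rw [mul_comm, norm_exp_ofReal_mul_I])

end Integrals

lemma conj_exp_I_mul_mul_self (θ : ℝ) : conj (exp (I * θ)) * exp (I * θ) = 1 := by
  rw [conj_mul', mul_comm, norm_exp_ofReal_mul_I]
  simp

lemma norm_eq_of_conj_mul_self_eq {a b : ℂ} (h : conj a * a = conj b * b) : ‖a‖ = ‖b‖ := by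
  rw [conj_mul', conj_mul'] at h
  exact (pow_left_inj₀ (norm_nonneg a) (norm_nonneg b) two_ne_zero).1 (by exact_mod_cast h)

lemma conj_mul_eq_mul_conj_of_phase {u w c : ℂ} (hu : u ≠ 0) (hc : conj c * c = 1)
    (hphase : c * w = u ^ 2) (hreal : conj w * u = conj u * w) : conj c * u = c * conj u := by
  have hphase' : conj c * conj w = conj u ^ 2 := by
    simpa using congrArg conj hphase
  have hcu : conj u ≠ 0 := (map_ne_zero _).2 hu
  apply mul_left_cancel₀ (mul_ne_zero hcu hu)
  linear_combination (-(conj u) * conj c) * hphase + u * c * hphase' +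
    (conj u * w - u * conj w) * hc - hreal

section Polynomial

variable {R : Type*} [CommRing R] [IsDomain R] [Infinite R]

open Polynomial in
lemma eq_zero_of_forall_sum_pow_mul_eq_zero {n : ℕ} {c : ℕ → R}
    (h : ∀ t : R, ∑ j ∈ range (n + 1), t ^ j * c j = 0) {j : ℕ} (hj : j ≤ n) : c j = 0 := by
  have hp : ∑ i ∈ range (n + 1), C (c i) * X ^ i = 0 := Polynomial.funext fun t => by
    rw [eval_finsetSum, eval_zero, ← h t]
    exact Finset.sum_congr rfl fun i _ => by rw [eval_mul, eval_C, eval_pow, eval_X, mul_comm]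
  have := congrArg (coeff · j) hp
  simp only [finsetSum_coeff, coeff_C_mul_X_pow, coeff_zero] at this
  rwa [Finset.sum_ite_eq, if_pos (Finset.mem_range.2 (Nat.lt_succ_of_le hj))] at this

lemma eq_zero_of_forall_sum_sum_pow_mul_eq_zero {n : ℕ} {c : ℕ → ℕ → R}
    (h : ∀ s t : R, ∑ i ∈ range (n + 1), ∑ j ∈ range (n + 1), s ^ i * t ^ j * c i j = 0)
    {i j : ℕ} (hi : i ≤ n) (hj : j ≤ n) : c i j = 0 := by
  have hrow : ∀ s : R, ∑ i ∈ range (n + 1), s ^ i * c i j = 0 := fun s =>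
    eq_zero_of_forall_sum_pow_mul_eq_zero (c := fun j => ∑ i ∈ range (n + 1), s ^ i * c i j)
      (fun t => by
        rw [← h s t, Finset.sum_comm]
        refine Finset.sum_congr rfl fun j _ => ?_
        rw [Finset.mul_sum]
        exact Finset.sum_congr rfl fun i _ => by ring) hj
  exact eq_zero_of_forall_sum_pow_mul_eq_zero hrow hi

end Polynomial

structure IsLinearA (d : ℕ) (T : (Dom d → ℂ) → Dom d → ℂ) : Prop where
  mem : ∀ f, MemA d f → MemA d (T f)
  add : ∀ f g, MemA d f → MemA d g → T (f + g) =ᵐ[volume] T f + T g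
  smul : ∀ (a : ℂ) f, MemA d f → T (a • f) =ᵐ[volume] a • T f

def PreservesPip (d : ℕ) (T : (Dom d → ℂ) → Dom d → ℂ) : Prop :=
  ∀ k : ℕ, 1 ≤ k → ∀ f g, MemA d f → MemA d g → pip d (T f) (T g) k = pip d f g k

def SurjectiveA (d : ℕ) (T : (Dom d → ℂ) → Dom d → ℂ) : Prop :=
  ∀ g, MemA d g → ∃ f, MemA d f ∧ T f =ᵐ[volume] g

section LinearMaps

variable {d : ℕ} {T : (Dom d → ℂ) → Dom d → ℂ} {f g h : Dom d → ℂ}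

lemma IsLinearA.add_smul (hT : IsLinearA d T) (hf : MemA d f) (hh : MemA d h) (a : ℂ) :
    T (f + a • h) =ᵐ[volume] fun x => T f x + a * T h x := by
  filter_upwards [hT.add f _ hf (hh.const_smul a), hT.smul a h hh] with x hadd hsmul
  rw [hadd, Pi.add_apply, hsmul, Pi.smul_apply, smul_eq_mul]

lemma IsLinearA.sub (hT : IsLinearA d T) (hf : MemA d f) (hg : MemA d g) :
    T (f - g) =ᵐ[volume] T f - T g := by
  rw [sub_eq_add_neg, ← neg_one_smul ℂ g]
  filter_upwards [hT.add_smul hf hg (-1)] with x hx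
  rw [hx, Pi.sub_apply]
  ring

lemma PreservesPip.integral_conj_mul (hpip : PreservesPip d T) (hf : MemA d f)
    (hg : MemA d g) :
    ∫ x, conj (T f x) * T g x = ∫ x, conj (f x) * g x := by
  simpa [pip] using hpip 1 le_rfl f g hf hg

lemma PreservesPip.ae_eq_zero_iff (hT : IsLinearA d T) (hpip : PreservesPip d T)
    (hf : MemA d f) : T f =ᵐ[volume] 0 ↔ f =ᵐ[volume] 0 := by
  rw [← integral_conj_mul_self_eq_zero_iff (hT.mem f hf).1,
    ← integral_conj_mul_self_eq_zero_iff hf.1, hpip.integral_conj_mul hf hf]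

lemma PreservesPip.ae_eq_iff (hT : IsLinearA d T) (hpip : PreservesPip d T)
    (hf : MemA d f) (hg : MemA d g) : T f =ᵐ[volume] T g ↔ f =ᵐ[volume] g := by
  rw [Filter.eventuallyEq_iff_sub (f := T f), Filter.eventuallyEq_iff_sub (f := f),
    ← hpip.ae_eq_zero_iff hT (hf.sub hg)]
  exact ⟨(hT.sub hf hg).trans, (hT.sub hf hg).symm.trans⟩

end LinearMaps

def mixedMoment (d : ℕ) (f g h : Dom d → ℂ) (k m n : ℕ) : ℂ :=
  ∫ x, conj (h x ^ m * f x ^ (k - m)) * (h x ^ n * g x ^ (k - n))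

section Polarization

variable {d : ℕ} {T : (Dom d → ℂ) → Dom d → ℂ} {f g h : Dom d → ℂ}

lemma pip_congr_ae {f₁ f₂ g₁ g₂ : Dom d → ℂ} (hf : f₁ =ᵐ[volume] f₂) (hg : g₁ =ᵐ[volume] g₂)
    (k : ℕ) : pip d f₁ g₁ k = pip d f₂ g₂ k :=
  integral_congr_ae (by filter_upwards [hf, hg] with x hfx hgx; rw [hfx, hgx])

lemma pip_add_mul_add_mul (hf : MemA d f) (hg : MemA d g) (hh : MemA d h) {k : ℕ} (hk : 1 ≤ k)
    (s t : ℂ) :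
    pip d (fun x => f x + s * h x) (fun x => g x + t * h x) k =
      ∑ m ∈ range (k + 1), ∑ n ∈ range (k + 1),
        conj s ^ m * t ^ n * (k.choose m * k.choose n * mixedMoment d f g h k m n) := by
  have hint : ∀ m n, Integrable
      (fun x => conj (h x ^ m * f x ^ (k - m)) * (h x ^ n * g x ^ (k - n))) volume :=
    fun m n => MemLp.integrable_conj_mul (hh.pow_mul_pow hf (by omega)).1
      (hh.pow_mul_pow hg (by omega)).1
  have hpt : ∀ x, conj (f x + s * h x) ^ k * (g x + t * h x) ^ k =
      ∑ m ∈ range (k + 1), ∑ n ∈ range (k + 1), conj s ^ m * t ^ n * (k.choose m * k.choose n *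
        (conj (h x ^ m * f x ^ (k - m)) * (h x ^ n * g x ^ (k - n)))) := by
    intro x
    rw [map_add, map_mul, add_comm, add_pow, add_comm (g x), add_pow, Finset.sum_mul_sum]
    refine Finset.sum_congr rfl fun m _ => Finset.sum_congr rfl fun n _ => ?_
    simp only [map_mul, map_pow]
    ring
  simp only [pip, hpt, mixedMoment]
  rw [integral_finsetSum _ fun m _ => integrable_finsetSum _ fun n _ =>
    ((hint m n).const_mul _).const_mul _]
  refine Finset.sum_congr rfl fun m _ => ?_
  rw [integral_finsetSum _ fun n _ => ((hint m n).const_mul _).const_mul _]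
  refine Finset.sum_congr rfl fun n _ => ?_
  rw [integral_const_mul, integral_const_mul]

lemma PreservesPip.mixedMoment_eq (hT : IsLinearA d T) (hpip : PreservesPip d T)
    (hf : MemA d f) (hg : MemA d g) (hh : MemA d h) {k m n : ℕ} (hk : 1 ≤ k) (hm : m ≤ k)
    (hn : n ≤ k) : mixedMoment d (T f) (T g) (T h) k m n = mixedMoment d f g h k m n := by
  have hpoly : ∀ s t : ℂ, ∑ m ∈ range (k + 1), ∑ n ∈ range (k + 1), s ^ m * t ^ n *
      (k.choose m * k.choose n *
        (mixedMoment d (T f) (T g) (T h) k m n - mixedMoment d f g h k m n)) = 0 := by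
    intro s t
    have hs : pip d (fun x => T f x + conj s * T h x) (fun x => T g x + t * T h x) k =
        pip d (fun x => f x + conj s * h x) (fun x => g x + t * h x) k := by
      rw [← pip_congr_ae (hT.add_smul hf hh _) (hT.add_smul hg hh t)]
      exact hpip k hk _ _ (hf.add (hh.const_smul _)) (hg.add (hh.const_smul t))
    rw [pip_add_mul_add_mul (hT.mem f hf) (hT.mem g hg) (hT.mem h hh) hk,
      pip_add_mul_add_mul hf hg hh hk, conj_conj] at hs
    simp only [mul_sub, Finset.sum_sub_distrib, hs, sub_self]
  have := eq_zero_of_forall_sum_sum_pow_mul_eq_zero hpoly hm hn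
  simpa [sub_eq_zero, Nat.choose_eq_zero_iff, not_lt.2 hm, not_lt.2 hn] using this

lemma PreservesPip.integral_conj_pow_mul_pow_mul_conj_mul_self (hT : IsLinearA d T)
    (hpip : PreservesPip d T) (hf : MemA d f) (hg : MemA d g) (hh : MemA d h) (j : ℕ) :
    ∫ x, conj (T f x) ^ j * T g x ^ j * (conj (T h x) * T h x) =
      ∫ x, conj (f x) ^ j * g x ^ j * (conj (h x) * h x) := by
  have hmm : ∀ f g h : Dom d → ℂ, mixedMoment d f g h (j + 1) 1 1 =
      ∫ x, conj (f x) ^ j * g x ^ j * (conj (h x) * h x) := fun f g h => by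
    simp only [mixedMoment, Nat.add_sub_cancel, pow_one, map_mul, map_pow]
    exact integral_congr_ae (ae_of_all _ fun x => by ring)
  rw [← hmm, ← hmm]
  exact hpip.mixedMoment_eq hT hf hg hh (by omega) (by omega) (by omega)

lemma PreservesPip.integral_conj_mul_mul_conj_mul_self (hT : IsLinearA d T)
    (hpip : PreservesPip d T) (hf : MemA d f) (hg : MemA d g) (hh : MemA d h) :
    ∫ x, conj (T f x) * T g x * (conj (T h x) * T h x) =
      ∫ x, conj (f x) * g x * (conj (h x) * h x) := by
  simpa only [pow_one] using hpip.integral_conj_pow_mul_pow_mul_conj_mul_self hT hf hg hh 1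

end Polarization

section Testing

variable {d : ℕ} {T : (Dom d → ℂ) → Dom d → ℂ}

lemma SurjectiveA.ae_eq_of_forall_integral_eq (hsurj : SurjectiveA d T) {v₁ v₂ : Dom d → ℂ}
    (hv₁ : Integrable v₁ volume) (hv₂ : Integrable v₂ volume)
    (htest : ∀ h, MemA d h →
      ∫ x, v₁ x * (conj (T h x) * T h x) = ∫ x, v₂ x * (conj (T h x) * T h x)) :
    v₁ =ᵐ[volume] v₂ := by
  refine ae_eq_of_forall_setIntegral_eq_of_sigmaFinite (fun _ _ _ => hv₁.integrableOn)
    (fun _ _ _ => hv₂.integrableOn) fun S hS hSfin => ?_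
  obtain ⟨h, hh, hTh⟩ := hsurj _ (memA_indicator_one hS hSfin.ne)
  rw [setIntegral_eq_integral_mul_conj_mul_self hS hTh,
    setIntegral_eq_integral_mul_conj_mul_self hS hTh, htest h hh]

variable {p₁ q₁ p₂ q₂ : Dom d → ℂ}

lemma conj_mul_ae_eq_of_conj_mul_eq (hT : IsLinearA d T) (hpip : PreservesPip d T)
    (hsurj : SurjectiveA d T) (hp₁ : MemA d p₁) (hq₁ : MemA d q₁) (hp₂ : MemA d p₂)
    (hq₂ : MemA d q₂) (heq : ∀ x, conj (p₁ x) * q₁ x = conj (p₂ x) * q₂ x) :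
    (fun x => conj (T p₁ x) * T q₁ x) =ᵐ[volume] fun x => conj (T p₂ x) * T q₂ x := by
  refine hsurj.ae_eq_of_forall_integral_eq
    ((hT.mem _ hp₁).1.integrable_conj_mul (hT.mem _ hq₁).1)
    ((hT.mem _ hp₂).1.integrable_conj_mul (hT.mem _ hq₂).1) fun h hh => ?_
  simp only [hpip.integral_conj_mul_mul_conj_mul_self hT hp₁ hq₁ hh,
    hpip.integral_conj_mul_mul_conj_mul_self hT hp₂ hq₂ hh, heq]

lemma norm_apply_mul_self_ae_eq (hT : IsLinearA d T) (hpip : PreservesPip d T)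
    (hsurj : SurjectiveA d T) {p : Dom d → ℂ} (hp : MemA d p) :
    ∀ᵐ x, ‖T (p * p) x‖ = ‖T p x‖ ^ 2 := by
  have hp2 := hp.mul hp
  have hTp2 := (hT.mem p hp).pow (n := 2) (by norm_num)
  have hmod : (fun x => conj (T (p * p) x) * T (p * p) x) =ᵐ[volume]
      fun x => conj (T p x ^ 2) * T p x ^ 2 := by
    refine hsurj.ae_eq_of_forall_integral_eq
      ((hT.mem _ hp2).1.integrable_conj_mul (hT.mem _ hp2).1)
      (hTp2.1.integrable_conj_mul hTp2.1) fun h hh => ?_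
    rw [hpip.integral_conj_mul_mul_conj_mul_self hT hp2 hp2 hh]
    simp only [map_pow, hpip.integral_conj_pow_mul_pow_mul_conj_mul_self hT hp hp hh 2]
    exact integral_congr_ae (ae_of_all _ fun x => by simp only [Pi.mul_apply, map_mul]; ring)
  filter_upwards [hmod] with x hx
  rw [norm_eq_of_conj_mul_self_eq hx, norm_pow]

lemma ae_ne_zero_of_forall_ne_zero (hT : IsLinearA d T) (hpip : PreservesPip d T)
    (hsurj : SurjectiveA d T) {q : Dom d → ℂ} (hq : MemA d q) (hq0 : ∀ x, q x ≠ 0) :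
    ∀ᵐ x, T q x ≠ 0 := by
  have hTq := (hT.mem q hq).1.1
  refine ae_of_forall_measure_lt_top_ae_restrict _ fun S hS hSfin => ?_
  set Z := S ∩ hTq.mk _ ⁻¹' {0}
  have hZ : MeasurableSet Z :=
    hS.inter (hTq.stronglyMeasurable_mk.measurable (measurableSet_singleton 0))
  obtain ⟨h, hh, hTh⟩ := hsurj _ (memA_indicator_one hZ
    ((measure_mono Set.inter_subset_left).trans_lt hSfin).ne)
  -- on `Z` the factor `T q` vanishes, off `Z` the factor `T h` does
  have hTqTh : ∫ x, conj (T q x) * T q x * (conj (T h x) * T h x) = 0 := by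
    refine integral_eq_zero_of_ae ?_
    filter_upwards [hTq.ae_eq_mk, hTh] with x hmk hx
    by_cases hxZ : x ∈ Z
    · simp [hmk, show hTq.mk _ x = 0 from hxZ.2]
    · simp [hx, hxZ]
  have hqh : q * h =ᵐ[volume] 0 := by
    rw [← integral_conj_mul_self_eq_zero_iff (hq.mul hh).1, ← hTqTh,
      hpip.integral_conj_mul_mul_conj_mul_self hT hq hq hh]
    exact integral_congr_ae (ae_of_all _ fun x => by simp only [Pi.mul_apply, map_mul]; ring)
  have hTh0 : T h =ᵐ[volume] 0 :=
    (hpip.ae_eq_zero_iff hT hh).2 (hqh.mono fun x hx => (mul_eq_zero.1 hx).resolve_left (hq0 x))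
  have hZ0 : volume Z = 0 := by
    simpa [Set.indicator_ae_eq_zero, Function.support_const] using hTh.symm.trans hTh0
  rw [ae_restrict_iff' hS]
  filter_upwards [hTq.ae_eq_mk, measure_eq_zero_iff_ae_notMem.1 hZ0] with x hmk hxZ hxS
  rw [hmk]
  exact fun h0 => hxZ ⟨hxS, h0⟩

end Testing

section StarAutomorphism

variable {d : ℕ} {T : (Dom d → ℂ) → Dom d → ℂ} {e f g : Dom d → ℂ}

lemma conj_apply_conj_mul_ae_eq (hT : IsLinearA d T) (hpip : PreservesPip d T)
    (hsurj : SurjectiveA d T) (he : MemA d e) (he_real : ∀ x, conj (e x) = e x)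
    (hf : MemA d f) :
    (fun x => conj (T (fun y => conj (f y)) x) * T e x) =ᵐ[volume]
      fun x => conj (T e x) * T f x :=
  conj_mul_ae_eq_of_conj_mul_eq hT hpip hsurj hf.conj he he hf fun x => by
    rw [conj_conj, he_real, mul_comm]

lemma mul_apply_mul_ae_eq (hT : IsLinearA d T) (hpip : PreservesPip d T) (hsurj : SurjectiveA d T)
    (he : MemA d e) (he_real : ∀ x, conj (e x) = e x) (hu : ∀ᵐ x, T e x ≠ 0)
    (hf : MemA d f) (hg : MemA d g) :
    (fun x => T e x * T (f * g) x) =ᵐ[volume] fun x => T f x * T (g * e) x := by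
  have hmul := conj_mul_ae_eq_of_conj_mul_eq hT hpip hsurj he (hf.mul hg) hf.conj (hg.mul he)
    fun x => by simp only [Pi.mul_apply, conj_conj, he_real]; ring
  filter_upwards [hmul, conj_apply_conj_mul_ae_eq hT hpip hsurj he he_real hf, hu]
    with x h₁ h₂ hux
  apply mul_left_cancel₀ ((map_ne_zero _).2 hux : conj (T e x) ≠ 0)
  linear_combination T e x * h₁ + T (g * e) x * h₂

lemma sq_mul_apply_mul_ae_eq (hT : IsLinearA d T) (hpip : PreservesPip d T)
    (hsurj : SurjectiveA d T) (he : MemA d e) (he_real : ∀ x, conj (e x) = e x)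
    (hu : ∀ᵐ x, T e x ≠ 0) (hf : MemA d f) (hg : MemA d g) :
    (fun x => T e x ^ 2 * T (f * g) x) =ᵐ[volume] fun x => T f x * T g x * T (e * e) x := by
  filter_upwards [mul_apply_mul_ae_eq hT hpip hsurj he he_real hu hf hg,
    mul_apply_mul_ae_eq hT hpip hsurj he he_real hu hg he] with x h₁ h₂
  linear_combination T e x * h₁ + T f x * h₂

lemma isStarAuto_of_phase (hT : IsLinearA d T) (hpip : PreservesPip d T)
    (hsurj : SurjectiveA d T) (he : MemA d e) (he_real : ∀ x, conj (e x) = e x)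
    (hu : ∀ᵐ x, T e x ≠ 0) {θ : Dom d → ℝ} (hθ : Measurable θ)
    (hphase : ∀ᵐ x, exp (I * θ x) * T (e * e) x = T e x ^ 2) :
    IsStarAuto d fun f x => conj (exp (I * θ x)) * T f x := by
  have hc := fun x => conj_exp_I_mul_mul_self (θ x)
  have hc_top := memLp_top_exp_I_mul (μ := volume) hθ
  have hreal : ∀ᵐ x, conj (T (e * e) x) * T e x = conj (T e x) * T (e * e) x := by
    have hee : (fun y => conj ((e * e) y)) = e * e := funext fun y => by simp [he_real]
    have h := conj_apply_conj_mul_ae_eq hT hpip hsurj he he_real (he.mul he)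
    rw [hee] at h
    exact h
  refine ⟨⟨fun f hf => (hT.mem f hf).mul_of_memLp_top hc_top.star, ?_, ?_, ?_, ?_, ?_, ?_⟩, ?_, ?_⟩
  · intro f g hf hg hfg
    filter_upwards [(hpip.ae_eq_iff hT hf hg).2 hfg] with x hx
    rw [hx]
  · intro f g hf hg
    filter_upwards [hT.add f g hf hg] with x hx
    simp only [hx, Pi.add_apply]
    ring
  · intro a f hf
    filter_upwards [hT.smul a f hf] with x hx
    simp only [hx, Pi.smul_apply, smul_eq_mul]
    ring
  · intro f g hf hg
    rw [← hpip.integral_conj_mul hf hg]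
    refine integral_congr_ae (ae_of_all _ fun x => ?_)
    simp only [map_mul, conj_conj]
    linear_combination (conj (T f x) * T g x) * hc x
  · intro f g hf hg
    filter_upwards [sq_mul_apply_mul_ae_eq hT hpip hsurj he he_real hu hf hg, hphase, hu]
      with x h₁ hph hux
    apply mul_left_cancel₀ (pow_ne_zero 2 hux)
    simp only [Pi.mul_apply]
    linear_combination conj (exp (I * θ x)) * h₁ +
      conj (exp (I * θ x)) ^ 2 * T f x * T g x * hph -
      conj (exp (I * θ x)) * T f x * T g x * T (e * e) x * hc x
  · intro f hf
    filter_upwards [conj_apply_conj_mul_ae_eq hT hpip hsurj he he_real hf, hphase, hreal, hu]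
      with x h₁ hph hre hux
    have h₁' : T (fun y => conj (f y)) x * conj (T e x) = T e x * conj (T f x) := by
      simpa using congrArg conj h₁
    apply mul_left_cancel₀ ((map_ne_zero _).2 hux : conj (T e x) ≠ 0)
    simp only [map_mul, conj_conj]
    linear_combination conj (exp (I * θ x)) * h₁' +
      conj (T f x) * conj_mul_eq_mul_conj_of_phase hux (hc x) hph hre
  · intro g hg
    obtain ⟨f, hf, hTf⟩ := hsurj _ (hg.mul_of_memLp_top hc_top)
    refine ⟨f, hf, ?_⟩
    filter_upwards [hTf] with x hx
    rw [hx]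
    linear_combination g x * hc x
  · intro f g hf hg hfg
    refine (hpip.ae_eq_iff hT hf hg).1 ?_
    filter_upwards [hfg] with x hx
    exact mul_left_cancel₀ ((map_ne_zero _).2 (exp_ne_zero _)) hx

lemma exists_phase_mul_isStarAuto (hT : IsLinearA d T)
    (hpip : PreservesPip d T) (hsurj : SurjectiveA d T) :
    ∃ (α : Dom d → ℝ) (T₁ : (Dom d → ℂ) → (Dom d → ℂ)), Measurable α ∧ IsStarAuto d T₁ ∧
      ∀ f, MemA d f → T f =ᵐ[volume] fun x => exp (I * α x) * T₁ f x := by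
  obtain ⟨E, hE0, hE⟩ := exists_pos_memA d
  set e : Dom d → ℂ := fun x => (E x : ℂ)
  have he0 : ∀ x, e x ≠ 0 := fun x => ofReal_ne_zero.2 (hE0 x).ne'
  have he_real : ∀ x, conj (e x) = e x := fun x => conj_ofReal _
  have hu := ae_ne_zero_of_forall_ne_zero hT hpip hsurj hE he0
  have hw := ae_ne_zero_of_forall_ne_zero hT hpip hsurj (hE.mul hE) fun x =>
    mul_ne_zero (he0 x) (he0 x)
  have hρ : AEMeasurable (fun x => T e x ^ 2 / T (e * e) x) volume :=
    ((hT.mem e hE).1.1.aemeasurable.pow_const 2).div (hT.mem _ (hE.mul hE)).1.1.aemeasurable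
  obtain ⟨θ, hθ, hθρ⟩ := exists_measurable_exp_mul_I_ae_eq hρ (by
    filter_upwards [norm_apply_mul_self_ae_eq hT hpip hsurj hE, hw] with x hmod hwx
    rw [norm_div, norm_pow, ← hmod]
    exact div_self (norm_ne_zero_iff.2 hwx))
  have hphase : ∀ᵐ x, exp (I * θ x) * T (e * e) x = T e x ^ 2 := by
    filter_upwards [hθρ, hw] with x hx hwx
    rw [hx, div_mul_cancel₀ _ hwx]
  refine ⟨θ, _, hθ, isStarAuto_of_phase hT hpip hsurj hE he_real hu hθ hphase,
    fun f _ => ae_of_all _ fun x => ?_⟩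
  linear_combination -(T f x) * conj_exp_I_mul_mul_self (θ x)

end StarAutomorphism

section PhaseTimesAutomorphism

variable {d : ℕ} {T T₁ : (Dom d → ℂ) → Dom d → ℂ} {α : Dom d → ℝ} {f : Dom d → ℂ}

lemma IsStarEndo.pow_ae_eq (hT₁ : IsStarEndo d T₁) (hf : MemA d f) {k : ℕ} (hk : 1 ≤ k) :
    T₁ (fun x => f x ^ k) =ᵐ[volume] fun x => T₁ f x ^ k := by
  induction k, hk using Nat.le_induction with
  | base => simp only [pow_one]; rfl
  | succ k hk ih =>
    filter_upwards [hT₁.mul _ f (hf.pow hk) hf, ih] with x h₁ h₂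
    rw [pow_succ, ← h₂]
    exact h₁

lemma IsStarEndo.preservesPip (hT₁ : IsStarEndo d T₁) : PreservesPip d T₁ := by
  intro k hk f g hf hg
  calc ∫ x, conj (T₁ f x) ^ k * T₁ g x ^ k
      = ∫ x, conj (T₁ (fun y => f y ^ k) x) * T₁ (fun y => g y ^ k) x :=
        integral_congr_ae <| by
          filter_upwards [hT₁.pow_ae_eq hf hk, hT₁.pow_ae_eq hg hk] with x h₁ h₂
          rw [h₁, h₂, map_pow]
    _ = ∫ x, conj (f x ^ k) * g x ^ k := hT₁.inner _ _ (hf.pow hk) (hg.pow hk)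
    _ = ∫ x, conj (f x) ^ k * g x ^ k := by simp only [map_pow]

lemma PreservesPip.phase_mul (hpip : PreservesPip d T₁)
    (hfac : ∀ f, MemA d f → T f =ᵐ[volume] fun x => exp (I * α x) * T₁ f x) :
    PreservesPip d T := by
  intro k hk f g hf hg
  rw [pip_congr_ae (hfac f hf) (hfac g hg), ← hpip k hk f g hf hg]
  refine integral_congr_ae (ae_of_all _ fun x => ?_)
  calc conj (exp (I * α x) * T₁ f x) ^ k * (exp (I * α x) * T₁ g x) ^ k
      = (conj (exp (I * α x)) * exp (I * α x)) ^ k * (conj (T₁ f x) ^ k * T₁ g x ^ k) := by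
        rw [map_mul]; ring
    _ = conj (T₁ f x) ^ k * T₁ g x ^ k := by rw [conj_exp_I_mul_mul_self, one_pow, one_mul]

lemma SurjectiveA.phase_mul (hα : Measurable α) (hsurj : SurjectiveA d T₁)
    (hfac : ∀ f, MemA d f → T f =ᵐ[volume] fun x => exp (I * α x) * T₁ f x) :
    SurjectiveA d T := by
  intro g hg
  obtain ⟨f, hf, hT₁f⟩ := hsurj _ (hg.mul_of_memLp_top (memLp_top_exp_I_mul hα).star)
  refine ⟨f, hf, (hfac f hf).trans ?_⟩
  filter_upwards [hT₁f] with x hx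
  rw [hx, Pi.star_apply, Complex.star_def]
  linear_combination g x * conj_exp_I_mul_mul_self (α x)

end PhaseTimesAutomorphism

theorem statement15 (d : ℕ)
    (T : (Dom d → ℂ) → (Dom d → ℂ))
    (hTmem : ∀ f, MemA d f → MemA d (T f))
    (hTadd : ∀ f g, MemA d f → MemA d g →
      T (f + g) =ᵐ[(volume : Measure (Dom d))] T f + T g)
    (hTsmul : ∀ (a : ℂ) (f : Dom d → ℂ), MemA d f →
      T (a • f) =ᵐ[(volume : Measure (Dom d))] a • T f) :
    ((∀ k : ℕ, 1 ≤ k → ∀ f g, MemA d f → MemA d g →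
      pip d (T f) (T g) k = pip d f g k) ∧
     (∀ g, MemA d g → ∃ f, MemA d f ∧ T f =ᵐ[(volume : Measure (Dom d))] g)) ↔
    (∃ (α : Dom d → ℝ) (T₁ : (Dom d → ℂ) → (Dom d → ℂ)),
      Measurable α ∧ IsStarAuto d T₁ ∧
      ∀ f, MemA d f → T f =ᵐ[(volume : Measure (Dom d))]
        fun x => Complex.exp (Complex.I * α x) * T₁ f x) := by
  have hT : IsLinearA d T := ⟨hTmem, hTadd, hTsmul⟩
  constructor
  · rintro ⟨hpip, hsurj⟩
    exact exists_phase_mul_isStarAuto hT hpip hsurj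
  · rintro ⟨α, T₁, hα, ⟨hT₁, hsurj₁, -⟩, hfac⟩
    exact ⟨hT₁.preservesPip.phase_mul hfac, SurjectiveA.phase_mul hα hsurj₁ hfac⟩
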